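/- Let u and v be strongly continuous one-parameter unitary groups on a Hilbert space H with selfadjoint generators A and B respectively. If there is a constant K such that ‖u(t) − v(t)‖ ≤ K|t| for all t in a neighborhood of 0, then dom A = dom B and A − B extends to a bounded operator C on H with ‖C‖ ≤ K (i.e., B = A + C with C bounded of norm at most K). -/

import Mathlib

open Filter Topology

/-- A one-parameter unitary group on a complex Hilbert space `H`. -/
def IsOneParamUnitaryGroup {H : Type*} [NormedAddCommGroup H] [InnerProductSpace ℂ H]
    [CompleteSpace H] (U : ℝ → (H →L[ℂ] H)) : Prop :=
  U 0 = 1 ∧ (∀ s t : ℝ, U (s + t) = U s * U t) ∧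
    (∀ t : ℝ, U t ∈ unitary (H →L[ℂ] H)) ∧ ∀ x : H, Continuous fun t : ℝ => U t x

/-- `A` is the generator of the one-parameter unitary group `u` (Stone's theorem). -/
def IsGenerator {H : Type*} [NormedAddCommGroup H] [InnerProductSpace ℂ H]
    [CompleteSpace H] (u : ℝ → (H →L[ℂ] H)) (A : H →ₗ.[ℂ] H) : Prop :=
  (∀ x : H, x ∈ A.domain ↔
      ∃ L : H, Tendsto (fun t : ℝ => (t : ℂ)⁻¹ • (u t x - x)) (𝓝[≠] (0 : ℝ)) (𝓝 L)) ∧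
    ∀ (x : H) (hx : x ∈ A.domain),
      Tendsto (fun t : ℝ => (t : ℂ)⁻¹ • (u t x - x)) (𝓝[≠] (0 : ℝ))
        (𝓝 (Complex.I • A ⟨x, hx⟩))

/-!
The difference quotients `(u t x - x) / t` and `(v t x - x) / t` differ in norm by at most
`K ‖x‖` for small `t ≠ 0`. So for `x ∈ dom A` the difference quotients of `v` at `x` stay
bounded, and self-adjointness of `B` turns this into `x ∈ dom B` (and symmetrically). On the
common dense domain `‖A x - B x‖ ≤ K ‖x‖` in the limit, so `B - A` extends to a bounded
operator of norm at most `K`.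
-/

open scoped InnerProductSpace

theorem tendsto_neg_nhdsNE_zero {G : Type*} [AddGroup G] [TopologicalSpace G] [ContinuousNeg G] :
    Tendsto (fun t : G => -t) (𝓝[≠] 0) (𝓝[≠] 0) :=
  (continuous_neg.tendsto' 0 0 neg_zero).inf <|
    tendsto_principal_principal.2 fun _ ht => neg_ne_zero.2 ht

theorem LinearPMap.exists_continuousLinearMap_norm_le {𝕜 E F : Type*} [NontriviallyNormedField 𝕜]
    [NormedAddCommGroup E] [NormedSpace 𝕜 E] [NormedAddCommGroup F] [NormedSpace 𝕜 F]
    [CompleteSpace F] (f : E →ₗ.[𝕜] F) (hf : Dense (f.domain : Set E)) {K : ℝ} (hK : 0 ≤ K)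
    (hbound : ∀ x : f.domain, ‖f x‖ ≤ K * ‖(x : E)‖) :
    ∃ C : E →L[𝕜] F, ‖C‖ ≤ K ∧ ∀ x : f.domain, C x = f x :=
  ⟨f.toFun.extendOfNorm f.domain.subtype,
    LinearMap.opNorm_extendOfNorm_le hf.denseRange_val hK hbound,
    LinearMap.extendOfNorm_eq hf.denseRange_val ⟨K, hbound⟩⟩

section DifferenceQuotient

variable {H : Type*} [NormedAddCommGroup H] [InnerProductSpace ℂ H]

noncomputable def diffQuotient (u : ℝ → H →L[ℂ] H) (x : H) (t : ℝ) : H :=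
  (t : ℂ)⁻¹ • (u t x - x)

theorem diffQuotient_sub_diffQuotient (u v : ℝ → H →L[ℂ] H) (x : H) (t : ℝ) :
    diffQuotient u x t - diffQuotient v x t = (t : ℂ)⁻¹ • (u t - v t) x := by
  rw [diffQuotient, diffQuotient, sub_apply]
  module

theorem norm_ofReal_inv_smul_apply_le {T : H →L[ℂ] H} {t K : ℝ} (ht : t ≠ 0)
    (hT : ‖T‖ ≤ K * |t|) (x : H) : ‖(t : ℂ)⁻¹ • T x‖ ≤ K * ‖x‖ := by
  have ht' : 0 < |t| := abs_pos.2 ht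
  calc ‖(t : ℂ)⁻¹ • T x‖ = |t|⁻¹ * ‖T x‖ := by
        rw [norm_smul, norm_inv, Complex.norm_real, Real.norm_eq_abs]
    _ ≤ |t|⁻¹ * (K * |t| * ‖x‖) := by gcongr; exact T.le_of_opNorm_le hT x
    _ = K * ‖x‖ := by field_simp

theorem eventually_norm_diffQuotient_sub_le {u v : ℝ → H →L[ℂ] H} {K : ℝ}
    (hK : ∀ᶠ t in 𝓝 0, ‖u t - v t‖ ≤ K * |t|) (x : H) :
    ∀ᶠ t in 𝓝[≠] 0, ‖diffQuotient u x t - diffQuotient v x t‖ ≤ K * ‖x‖ := by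
  filter_upwards [nhdsWithin_le_nhds hK, self_mem_nhdsWithin] with t hKt ht
  rw [diffQuotient_sub_diffQuotient]
  exact norm_ofReal_inv_smul_apply_le ht hKt x

end DifferenceQuotient

section UnitaryGroup

variable {H : Type*} [NormedAddCommGroup H] [InnerProductSpace ℂ H] [CompleteSpace H]
  {u v : ℝ → H →L[ℂ] H} {A B : H →ₗ.[ℂ] H}

theorem IsOneParamUnitaryGroup.adjoint_eq (hu : IsOneParamUnitaryGroup u) (t : ℝ) :
    ContinuousLinearMap.adjoint (u t) = u (-t) := by
  obtain ⟨h0, hmul, hunit, -⟩ := hu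
  rw [← ContinuousLinearMap.star_eq_adjoint]
  exact left_inv_eq_right_inv (Unitary.star_mul_self_of_mem (hunit t))
    (by rw [← hmul, add_neg_cancel, h0])

theorem IsOneParamUnitaryGroup.inner_diffQuotient_right (hu : IsOneParamUnitaryGroup u)
    (x y : H) (t : ℝ) : ⟪x, diffQuotient u y t⟫_ℂ = -⟪diffQuotient u x (-t), y⟫_ℂ := by
  have hadj : ⟪x, u t y⟫_ℂ = ⟪u (-t) x, y⟫_ℂ := by
    rw [← hu.adjoint_eq, ContinuousLinearMap.adjoint_inner_left]
  simp only [diffQuotient, inner_smul_left, inner_smul_right, inner_sub_left, inner_sub_right,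
    hadj, Complex.ofReal_neg, inv_neg, map_neg, map_inv₀, Complex.conj_ofReal]
  ring

theorem IsGenerator.norm_sub_apply_le (hgenA : IsGenerator u A) (hgenB : IsGenerator v B)
    {K : ℝ} (hK : ∀ᶠ t in 𝓝 0, ‖u t - v t‖ ≤ K * |t|) {x : H} (hx : x ∈ A.domain)
    (hx' : x ∈ B.domain) : ‖A ⟨x, hx⟩ - B ⟨x, hx'⟩‖ ≤ K * ‖x‖ := by
  have hlim := ((hgenA.2 x hx).sub (hgenB.2 x hx')).norm
  rw [← smul_sub, norm_smul, Complex.norm_I, one_mul] at hlim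
  exact le_of_tendsto hlim (eventually_norm_diffQuotient_sub_le hK x)

/-- Bounded difference quotients at `x` make `y ↦ ⟪x, B y⟫` bounded, because it is the limit of
`⟪x, diffQuotient v y t⟫ = -⟪diffQuotient v x (-t), y⟫`; so `x ∈ dom B† = dom B`. -/
theorem IsGenerator.mem_domain_of_eventually_norm_le (hgenB : IsGenerator v B)
    (hv : IsOneParamUnitaryGroup v) (hB : IsSelfAdjoint B) {x : H} {M : ℝ}
    (hM : ∀ᶠ t in 𝓝[≠] 0, ‖diffQuotient v x t‖ ≤ M) : x ∈ B.domain := by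
  have hbound : ∀ y : B.domain, ‖⟪x, B y⟫_ℂ‖ ≤ M * ‖(y : H)‖ := by
    intro y
    have hlim : Tendsto (fun t => ⟪x, diffQuotient v y t⟫_ℂ) (𝓝[≠] 0)
        (𝓝 ⟪x, Complex.I • B y⟫_ℂ) :=
      tendsto_const_nhds.inner (hgenB.2 y y.2)
    have hle : ∀ᶠ t in 𝓝[≠] 0, ‖⟪x, diffQuotient v y t⟫_ℂ‖ ≤ M * ‖(y : H)‖ := by
      filter_upwards [tendsto_neg_nhdsNE_zero.eventually hM] with t ht
      rw [hv.inner_diffQuotient_right, norm_neg]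
      exact (norm_inner_le_norm _ _).trans (mul_le_mul_of_nonneg_right ht (norm_nonneg _))
    simpa only [inner_smul_right, norm_mul, Complex.norm_I, one_mul] using
      le_of_tendsto hlim.norm hle
  rw [← LinearPMap.isSelfAdjoint_def.mp hB, LinearPMap.mem_adjoint_domain_iff]
  exact AddMonoidHomClass.continuous_of_bound _ M hbound

theorem IsGenerator.domain_le (hgenA : IsGenerator u A) (hgenB : IsGenerator v B)
    (hv : IsOneParamUnitaryGroup v) (hB : IsSelfAdjoint B) {K : ℝ}
    (hK : ∀ᶠ t in 𝓝 0, ‖u t - v t‖ ≤ K * |t|) : A.domain ≤ B.domain := by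
  intro x hx
  refine hgenB.mem_domain_of_eventually_norm_le hv hB
    (M := ‖Complex.I • A ⟨x, hx⟩‖ + 1 + K * ‖x‖) ?_
  filter_upwards [(hgenA.2 x hx).norm.eventually_le_const (lt_add_one _),
    eventually_norm_diffQuotient_sub_le hK x] with t hq hqv
  exact (norm_le_norm_add_norm_sub (diffQuotient u x t) _).trans (add_le_add hq hqv)

end UnitaryGroup

/-- If `‖u(t) − v(t)‖ ≤ K|t|` near `0`, then the selfadjoint generators
`A`, `B` of `u`, `v` have the same domain and `B = A + C` for a bounded operator `C` with
`‖C‖ ≤ K`. -/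
theorem bounded_perturbation_of_norm_close {H : Type*} [NormedAddCommGroup H]
    [InnerProductSpace ℂ H] [CompleteSpace H] (u v : ℝ → (H →L[ℂ] H))
    (hu : IsOneParamUnitaryGroup u) (hv : IsOneParamUnitaryGroup v)
    (A B : H →ₗ.[ℂ] H) (hA : IsSelfAdjoint A) (hB : IsSelfAdjoint B)
    (hgenA : IsGenerator u A) (hgenB : IsGenerator v B) (K : ℝ)
    (hK : ∃ ε > (0 : ℝ), ∀ t : ℝ, |t| < ε → ‖u t - v t‖ ≤ K * |t|) :
    A.domain = B.domain ∧
      ∃ C : H →L[ℂ] H, ‖C‖ ≤ K ∧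
        ∀ (x : H) (hx : x ∈ A.domain) (hx' : x ∈ B.domain),
          B ⟨x, hx'⟩ = A ⟨x, hx⟩ + C x := by
  obtain ⟨ε, hε, hKε⟩ := hK
  have hK0 : 0 ≤ K := nonneg_of_mul_nonneg_left
    ((norm_nonneg _).trans (hKε (ε / 2) (by rw [abs_of_pos (by positivity)]; linarith)))
    (by positivity : 0 < |ε / 2|)
  have huv : ∀ᶠ t in 𝓝 0, ‖u t - v t‖ ≤ K * |t| :=
    Metric.eventually_nhds_iff.2 ⟨ε, hε, fun t ht => hKε t (by simpa using ht)⟩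
  have hvu : ∀ᶠ t in 𝓝 0, ‖v t - u t‖ ≤ K * |t| := by simpa only [norm_sub_rev] using huv
  have hdom : A.domain = B.domain :=
    le_antisymm (hgenA.domain_le hgenB hv hB huv) (hgenB.domain_le hgenA hu hA hvu)
  have hdense : Dense ((B - A).domain : Set H) := by
    rw [LinearPMap.sub_domain, hdom, inf_idem]
    exact hB.dense_domain
  obtain ⟨C, hCK, hC⟩ := (B - A).exists_continuousLinearMap_norm_le hdense hK0 fun x => by
    rw [LinearPMap.sub_apply, norm_sub_rev]
    exact hgenA.norm_sub_apply_le hgenB huv _ _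
  refine ⟨hdom, C, hCK, fun x hx hx' => ?_⟩
  rw [hC ⟨x, hx', hx⟩, LinearPMap.sub_apply]
  abel
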